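/- arXiv:2103.04606 — 5 statements merged into one kernel-verified Lean document; each statement's English description precedes it below -/
import Mathlib

section
/- Let X be a type, let θ, ε, ℓ : X → X and f : X → X → X satisfy the semi-ladder equations. Fix init ∈ X and a bit sequence b : ℕ → Bool, and define sequences x, y : ℕ → X by x₀ = init, y₀ = ℓ(init), and for each i ≥ 0: if b(i) is true then x_{i+1} = f(x_i, y_i) and y_{i+1} = ε(y_i); otherwise y_{i+1} = f(y_i, x_i) and x_{i+1} = ε(x_i). Then for every i ≥ 0 one has y_i = ℓ(x_i), and moreover x_{i+1} = θ(x_i) if b(i) is true and x_{i+1} = ε(x_i) otherwise. -/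
theorem ladder_invariant {X : Type*} {θ ε ℓ : X → X} {f : X → X → X}
    (hE1 : ∀ x, ε (ℓ x) = ℓ (θ x))
    (hE2 : ∀ x, f x (ℓ x) = θ x)
    (hE3 : ∀ x, f (ℓ x) x = ℓ (ε x))
    {b : ℕ → Bool} {x y : ℕ → X} (hy0 : y 0 = ℓ (x 0))
    (hstepT : ∀ i, b i = true → x (i + 1) = f (x i) (y i) ∧ y (i + 1) = ε (y i))
    (hstepF : ∀ i, b i = false → y (i + 1) = f (y i) (x i) ∧ x (i + 1) = ε (x i)) :
    ∀ i, y i = ℓ (x i)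
  | 0 => hy0
  | i + 1 => by
    have ih := ladder_invariant hE1 hE2 hE3 hy0 hstepT hstepF i
    cases hb : b i with
    | true =>
      obtain ⟨hx, hy⟩ := hstepT i hb
      rw [hx, hy, ih, hE2, hE1]
    | false =>
      obtain ⟨hy, hx⟩ := hstepF i hb
      rw [hx, hy, ih, hE3]

/-- semi-interleaved ladder correctness.
Given the semi-ladder equations (E1)-(E3) and sequences `x`, `y` following the
semi-interleaved ladder iteration, we have `y i = ℓ (x i)` for all `i`, and
`x (i+1) = θ (x i)` when `b i` is true, `x (i+1) = ε (x i)` otherwise. -/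
theorem semi_interleaved_ladder_correct {X : Type*}
    (θ ε ℓ : X → X) (f : X → X → X)
    (hE1 : ∀ x, ε (ℓ x) = ℓ (θ x))
    (hE2 : ∀ x, f x (ℓ x) = θ x)
    (hE3 : ∀ x, f (ℓ x) x = ℓ (ε x))
    (init : X) (b : ℕ → Bool) (x y : ℕ → X)
    (hx0 : x 0 = init) (hy0 : y 0 = ℓ init)
    (hstepT : ∀ i, b i = true → x (i + 1) = f (x i) (y i) ∧ y (i + 1) = ε (y i))
    (hstepF : ∀ i, b i = false → y (i + 1) = f (y i) (x i) ∧ x (i + 1) = ε (x i)) :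
    ∀ i, y i = ℓ (x i) ∧
      (b i = true → x (i + 1) = θ (x i)) ∧
      (b i = false → x (i + 1) = ε (x i)) := by
  have hinv := ladder_invariant hE1 hE2 hE3 (hx0 ▸ hy0) hstepT hstepF
  intro i
  refine ⟨hinv i, fun hb => ?_, fun hb => (hstepF i hb).2⟩
  rw [(hstepT i hb).1, hinv i, hE2]
end

section
/- Let X be a type, let θ, ε, ℓ : X → X and f, g : X → X → X satisfy the fully-ladder equations. Fix init ∈ X and a bit sequence b : ℕ → Bool, and define sequences x, y : ℕ → X by x₀ = init, y₀ = ℓ(init), and for each i ≥ 0: if b(i) is true then x_{i+1} = f(x_i, y_i) and y_{i+1} = g(x_{i+1}, y_i); otherwise y_{i+1} = f(y_i, x_i) and x_{i+1} = g(y_{i+1}, x_i). Then for every i ≥ 0 one has y_i = ℓ(x_i), and moreover x_{i+1} = θ(x_i) if b(i) is true and x_{i+1} = ε(x_i) otherwise. -/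
/-!
The invariant `y i = ℓ (x i)` is preserved by both kinds of step: on a `true` bit (F2) turns
`f (x, ℓ x)` into `θ x` and (F1) then makes the new `y` equal to `ℓ (θ x)`; on a `false` bit (F3)
makes the new `y` equal to `ℓ (ε x)` and (F4) turns the new `x` into `ε x`.
-/

section LadderStep

variable {X : Type*} {θ ε ℓ : X → X} {f g : X → X → X}

theorem ladder_step_of_true (hF1 : ∀ x, g (θ x) (ℓ x) = ℓ (θ x)) (hF2 : ∀ x, f x (ℓ x) = θ x)
    (x : X) : f x (ℓ x) = θ x ∧ g (f x (ℓ x)) (ℓ x) = ℓ (f x (ℓ x)) := by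
  rw [hF2, hF1]
  exact ⟨rfl, rfl⟩

theorem ladder_step_of_false (hF3 : ∀ x, f (ℓ x) x = ℓ (ε x))
    (hF4 : ∀ x, g (f (ℓ x) x) x = ε x) (x : X) :
    g (f (ℓ x) x) x = ε x ∧ f (ℓ x) x = ℓ (g (f (ℓ x) x) x) := by
  rw [hF4, hF3]
  exact ⟨rfl, rfl⟩

end LadderStep

/-- fully-interleaved ladder correctness.
Given the fully-ladder equations (F1)-(F4) and sequences `x`, `y` following the
fully-interleaved ladder iteration, we have `y i = ℓ (x i)` for all `i`, and
`x (i+1) = θ (x i)` when `b i` is true, `x (i+1) = ε (x i)` otherwise. -/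
theorem fully_interleaved_ladder_correct {X : Type*}
    (θ ε ℓ : X → X) (f g : X → X → X)
    (hF1 : ∀ x, g (θ x) (ℓ x) = ℓ (θ x))
    (hF2 : ∀ x, f x (ℓ x) = θ x)
    (hF3 : ∀ x, f (ℓ x) x = ℓ (ε x))
    (hF4 : ∀ x, g (f (ℓ x) x) x = ε x)
    (init : X) (b : ℕ → Bool) (x y : ℕ → X)
    (hx0 : x 0 = init) (hy0 : y 0 = ℓ init)
    (hstepT : ∀ i, b i = true →
      x (i + 1) = f (x i) (y i) ∧ y (i + 1) = g (x (i + 1)) (y i))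
    (hstepF : ∀ i, b i = false →
      y (i + 1) = f (y i) (x i) ∧ x (i + 1) = g (y (i + 1)) (x i)) :
    ∀ i, y i = ℓ (x i) ∧
      (b i = true → x (i + 1) = θ (x i)) ∧
      (b i = false → x (i + 1) = ε (x i)) := by
  have step_true (i : ℕ) (hb : b i = true) (hy : y i = ℓ (x i)) :
      x (i + 1) = θ (x i) ∧ y (i + 1) = ℓ (x (i + 1)) := by
    obtain ⟨hx', hy'⟩ := hstepT i hb
    rw [hy', hx', hy]
    exact ladder_step_of_true hF1 hF2 (x i)
  have step_false (i : ℕ) (hb : b i = false) (hy : y i = ℓ (x i)) :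
      x (i + 1) = ε (x i) ∧ y (i + 1) = ℓ (x (i + 1)) := by
    obtain ⟨hy', hx'⟩ := hstepF i hb
    rw [hx', hy', hy]
    exact ladder_step_of_false hF3 hF4 (x i)
  have invariant : ∀ i, y i = ℓ (x i) := by
    intro i
    induction i with
    | zero => rw [hx0, hy0]
    | succ i ih =>
      cases hb : b i
      · exact (step_false i hb ih).2
      · exact (step_true i hb ih).2
  exact fun i ↦ ⟨invariant i, fun hb ↦ (step_true i hb (invariant i)).1,
    fun hb ↦ (step_false i hb (invariant i)).1⟩
end

section
/- Let n ≥ 1, a ∈ ZMod n, and let b_d, b_{d−1}, …, b_0 be bits with k = Σ_{0 ≤ i ≤ d} b_i·2^i, and let m_d, …, m_0 ∈ ZMod n be arbitrary masks (one per iteration). Define x, y ∈ ZMod n by x = 1, y = a, and for i = d down to 0: if b_i = 1 then simultaneously x ← m_i·a·(x² + y²) + (1 − m_i·(a² + 1))·x·y and y ← y²; otherwise y ← m_i·a·(y² + x²) + (1 − m_i·(a² + 1))·y·x and x ← x². Then after processing all bits, x = a^k in ZMod n (and y = a·x throughout). -/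
/-- State of the masked semi-interleaved ladder for modular exponentiation after
`j` iterations: starting from `(x, y) = (1, a)`, iteration `j` (which processes
bit `d - j`, i.e. bits are processed from `i = d` down to `0`) simultaneously
updates, when the bit is `1`,
`x ← mᵢ·a·(x² + y²) + (1 − mᵢ·(a² + 1))·x·y` and `y ← y²`,
and otherwise `y ← mᵢ·a·(y² + x²) + (1 − mᵢ·(a² + 1))·y·x` and `x ← x²`. -/
def maskedExpLadder {n : ℕ} (a : ZMod n) (b : ℕ → Bool) (m : ℕ → ZMod n) (d : ℕ) :
    ℕ → ZMod n × ZMod n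
  | 0 => (1, a)
  | j + 1 =>
    let s := maskedExpLadder a b m d j
    let x := s.1
    let y := s.2
    let i := d - j
    if b i then
      (m i * a * (x ^ 2 + y ^ 2) + (1 - m i * (a ^ 2 + 1)) * (x * y), y ^ 2)
    else
      (x ^ 2, m i * a * (y ^ 2 + x ^ 2) + (1 - m i * (a ^ 2 + 1)) * (y * x))

/-!
Once `y = a·x` holds, the mask term cancels: `x² + y² = (1 + a²)·x²` and `x·y = a·x²`, so
`mᵢ·a·(x² + y²) + (1 − mᵢ·(a² + 1))·x·y = a·x²` whatever `mᵢ` is. Each iteration therefore maps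
`(x, a·x)` to `(a^{bᵢ}·x², a·a^{bᵢ}·x²)`, which is left-to-right binary exponentiation, and the
invariant `y = a·x` is preserved.
-/

def ladderExponent (b : ℕ → Bool) (d : ℕ) : ℕ → ℕ
  | 0 => 0
  | j + 1 => 2 * ladderExponent b d j + if b (d - j) then 1 else 0

theorem two_pow_mul_ladderExponent (b : ℕ → Bool) (d : ℕ) :
    ∀ j ≤ d + 1, 2 ^ (d + 1 - j) * ladderExponent b d j =
      ∑ i ∈ Finset.Ico (d + 1 - j) (d + 1), if b i then 2 ^ i else 0
  | 0, _ => by simp [ladderExponent]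
  | j + 1, hj => by
    have hbot : d + 1 - j = d - j + 1 := by omega
    rw [show d + 1 - (j + 1) = d - j by omega,
      Finset.sum_eq_sum_Ico_succ_bot (by omega : d - j < d + 1), ← hbot,
      ← two_pow_mul_ladderExponent b d j (by omega), ladderExponent, hbot]
    split_ifs <;> ring

theorem ladderExponent_eq_sum (b : ℕ → Bool) (d : ℕ) :
    ladderExponent b d (d + 1) = ∑ i ∈ Finset.range (d + 1), if b i then 2 ^ i else 0 := by
  have h := two_pow_mul_ladderExponent b d (d + 1) le_rfl
  rwa [Nat.sub_self, pow_zero, one_mul, ← Finset.range_eq_Ico] at h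

theorem maskedExpLadder_succ_of_snd_eq {n : ℕ} {a : ZMod n} {b : ℕ → Bool} {m : ℕ → ZMod n}
    {d j : ℕ} {x : ZMod n} (hx : maskedExpLadder a b m d j = (x, a * x)) :
    maskedExpLadder a b m d (j + 1) =
      (a ^ (if b (d - j) then 1 else 0) * x ^ 2,
        a * (a ^ (if b (d - j) then 1 else 0) * x ^ 2)) := by
  rw [maskedExpLadder, hx]
  split_ifs <;> refine Prod.ext ?_ ?_ <;> dsimp only <;> ring

theorem maskedExpLadder_eq_pow {n : ℕ} (a : ZMod n) (b : ℕ → Bool) (m : ℕ → ZMod n) (d : ℕ) :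
    ∀ j, maskedExpLadder a b m d j = (a ^ ladderExponent b d j, a * a ^ ladderExponent b d j)
  | 0 => by simp [maskedExpLadder, ladderExponent]
  | j + 1 => by
    rw [maskedExpLadder_succ_of_snd_eq (maskedExpLadder_eq_pow a b m d j), ladderExponent,
      pow_add, pow_mul', mul_comm (a ^ (if b (d - j) then 1 else 0))]

theorem maskedExpLadder_correct_general {n : ℕ} (a : ZMod n) (d : ℕ)
    (b : ℕ → Bool) (m : ℕ → ZMod n) (k : ℕ)
    (hk : k = ∑ i ∈ Finset.range (d + 1), (if b i then 2 ^ i else 0)) :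
    (maskedExpLadder a b m d (d + 1)).1 = a ^ k ∧
      ∀ j ≤ d + 1,
        (maskedExpLadder a b m d j).2 = a * (maskedExpLadder a b m d j).1 := by
  refine ⟨?_, fun j _ => ?_⟩
  · rw [maskedExpLadder_eq_pow, hk, ladderExponent_eq_sum]
  · rw [maskedExpLadder_eq_pow]

/-- after processing the bits `b d, …, b 0` of `k`, the masked
semi-interleaved ladder computes `x = a ^ k` in `ZMod n`, with arbitrary masks
`m i` (one per iteration), and `y = a * x` throughout. -/
theorem maskedExpLadder_correct {n : ℕ} (hn : 1 ≤ n) (a : ZMod n) (d : ℕ)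
    (b : ℕ → Bool) (m : ℕ → ZMod n) (k : ℕ)
    (hk : k = ∑ i ∈ Finset.range (d + 1), (if b i then 2 ^ i else 0)) :
    (maskedExpLadder a b m d (d + 1)).1 = a ^ k ∧
      ∀ j ≤ d + 1,
        (maskedExpLadder a b m d j).2 = a * (maskedExpLadder a b m d j).1 :=
  maskedExpLadder_correct_general a d b m k hk
end

section
/- Let n ≥ 1 and a, ℓ₁ ∈ ZMod n, and assume ℓ₁, ℓ₁² − 1, and ℓ₁³ − a are all units of ZMod n. Define θ(x) = a·x², ε(x) = x², ℓ(x) = ℓ₁·x, f(x, y) = (ℓ₁² − 1)⁻¹·((ℓ₁³ − a)·ℓ₁⁻¹·x·y − (ℓ₁ − a)·y²), and g(x, y) = (ℓ₁³ − a)⁻¹·(a·(ℓ₁² − 1)·y² + ℓ₁·(ℓ₁ − a)·x). Then θ, ε, ℓ, f, g satisfy the fully-ladder equations: for all x ∈ ZMod n, g(θ(x), ℓ(x)) = ℓ(θ(x)), f(x, ℓ(x)) = θ(x), f(ℓ(x), x) = ℓ(ε(x)), and g(f(ℓ(x), x), x) = ε(x). -/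
/-! The four equations are polynomial identities once the inverses are cleared: in each case the
bracket in `f` or `g` factors as the inverted unit times the desired right-hand side, the unit
`ℓ₁` entering `f` only to cancel the factor `ℓ₁` carried by `ℓ x`. -/

namespace ExpLadder

variable {R : Type*} [CommRing R]

noncomputable def f (a l x y : R) : R :=
  Ring.inverse (l ^ 2 - 1) * ((l ^ 3 - a) * Ring.inverse l * (x * y) - (l - a) * y ^ 2)

noncomputable def g (a l x y : R) : R :=
  Ring.inverse (l ^ 3 - a) * (a * (l ^ 2 - 1) * y ^ 2 + l * (l - a) * x)

variable {a l : R}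

theorem g_mul_sq_mul (h3 : IsUnit (l ^ 3 - a)) (x : R) :
    g a l (a * x ^ 2) (l * x) = l * (a * x ^ 2) := by
  rw [g, show a * (l ^ 2 - 1) * (l * x) ^ 2 + l * (l - a) * (a * x ^ 2)
      = (l ^ 3 - a) * (l * (a * x ^ 2)) by ring]
  exact Ring.inverse_mul_cancel_left _ _ h3

theorem f_self_mul (h1 : IsUnit l) (h2 : IsUnit (l ^ 2 - 1)) (x : R) :
    f a l x (l * x) = a * x ^ 2 := by
  rw [f, show (l ^ 3 - a) * Ring.inverse l * (x * (l * x)) - (l - a) * (l * x) ^ 2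
      = (l ^ 2 - 1) * (a * x ^ 2) by
    linear_combination (l ^ 3 - a) * x ^ 2 * Ring.inverse_mul_cancel l h1]
  exact Ring.inverse_mul_cancel_left _ _ h2

theorem f_mul_self (h1 : IsUnit l) (h2 : IsUnit (l ^ 2 - 1)) (x : R) :
    f a l (l * x) x = l * x ^ 2 := by
  rw [f, show (l ^ 3 - a) * Ring.inverse l * (l * x * x) - (l - a) * x ^ 2
      = (l ^ 2 - 1) * (l * x ^ 2) by
    linear_combination (l ^ 3 - a) * x ^ 2 * Ring.inverse_mul_cancel l h1]
  exact Ring.inverse_mul_cancel_left _ _ h2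

theorem g_mul_sq (h3 : IsUnit (l ^ 3 - a)) (x : R) : g a l (l * x ^ 2) x = x ^ 2 := by
  rw [g, show a * (l ^ 2 - 1) * x ^ 2 + l * (l - a) * (l * x ^ 2) = (l ^ 3 - a) * x ^ 2 by ring]
  exact Ring.inverse_mul_cancel_left _ _ h3

end ExpLadder

open ExpLadder in
theorem exp_fully_ladder_equations_general {n : ℕ} (a ℓ₁ : ZMod n)
    (h1 : IsUnit ℓ₁) (h2 : IsUnit (ℓ₁ ^ 2 - 1)) (h3 : IsUnit (ℓ₁ ^ 3 - a))
    (θ ε ℓ : ZMod n → ZMod n) (f g : ZMod n → ZMod n → ZMod n)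
    (hθ : ∀ x, θ x = a * x ^ 2)
    (hε : ∀ x, ε x = x ^ 2)
    (hℓ : ∀ x, ℓ x = ℓ₁ * x)
    (hf : ∀ x y, f x y =
      Ring.inverse (ℓ₁ ^ 2 - 1) *
        ((ℓ₁ ^ 3 - a) * Ring.inverse ℓ₁ * (x * y) - (ℓ₁ - a) * y ^ 2))
    (hg : ∀ x y, g x y =
      Ring.inverse (ℓ₁ ^ 3 - a) *
        (a * (ℓ₁ ^ 2 - 1) * y ^ 2 + ℓ₁ * (ℓ₁ - a) * x)) :
    (∀ x, g (θ x) (ℓ x) = ℓ (θ x)) ∧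
    (∀ x, f x (ℓ x) = θ x) ∧
    (∀ x, f (ℓ x) x = ℓ (ε x)) ∧
    (∀ x, g (f (ℓ x) x) x = ε x) := by
  obtain rfl : θ = fun x => a * x ^ 2 := funext hθ
  obtain rfl : ε = fun x => x ^ 2 := funext hε
  obtain rfl : ℓ = fun x => ℓ₁ * x := funext hℓ
  obtain rfl : f = ExpLadder.f a ℓ₁ := funext₂ hf
  obtain rfl : g = ExpLadder.g a ℓ₁ := funext₂ hg
  refine ⟨g_mul_sq_mul h3, f_self_mul h1 h2, f_mul_self h1 h2, fun x => ?_⟩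
  rw [f_mul_self h1 h2, g_mul_sq h3]

/-- the fully-interleaved ladder functions for the modular
exponentiation satisfy the fully-ladder equations in `ZMod n`, provided the
ladder constant `ℓ₁` is such that `ℓ₁`, `ℓ₁² − 1` and `ℓ₁³ − a` are units. -/
theorem exp_fully_ladder_equations {n : ℕ} (hn : 1 ≤ n) (a ℓ₁ : ZMod n)
    (h1 : IsUnit ℓ₁) (h2 : IsUnit (ℓ₁ ^ 2 - 1)) (h3 : IsUnit (ℓ₁ ^ 3 - a))
    (θ ε ℓ : ZMod n → ZMod n) (f g : ZMod n → ZMod n → ZMod n)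
    (hθ : ∀ x, θ x = a * x ^ 2)
    (hε : ∀ x, ε x = x ^ 2)
    (hℓ : ∀ x, ℓ x = ℓ₁ * x)
    (hf : ∀ x y, f x y =
      Ring.inverse (ℓ₁ ^ 2 - 1) *
        ((ℓ₁ ^ 3 - a) * Ring.inverse ℓ₁ * (x * y) - (ℓ₁ - a) * y ^ 2))
    (hg : ∀ x y, g x y =
      Ring.inverse (ℓ₁ ^ 3 - a) *
        (a * (ℓ₁ ^ 2 - 1) * y ^ 2 + ℓ₁ * (ℓ₁ - a) * x)) :
    (∀ x, g (θ x) (ℓ x) = ℓ (θ x)) ∧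
    (∀ x, f x (ℓ x) = θ x) ∧
    (∀ x, f (ℓ x) x = ℓ (ε x)) ∧
    (∀ x, g (f (ℓ x) x) x = ε x) :=
  exp_fully_ladder_equations_general a ℓ₁ h1 h2 h3 θ ε ℓ f g hθ hε hℓ hf hg
end

section
/- Let R be a commutative ring, M an R-module, A ∈ M, and c ∈ R such that c and 3 − 2c are units of R; write u = (3 − 2c)⁻¹. Define θ(P) = 2P + A, ε(P) = 2P, ℓ(P) = P + u·A, f(P, Q) = c·(P − Q − u·A) + 2Q + u·A, and g(P, Q) = P + c⁻¹·(−P + 2Q + u·A) − u·A. Then θ, ε, ℓ, f, g satisfy the fully-ladder equations: for all P ∈ M, g(θ(P), ℓ(P)) = ℓ(θ(P)), f(P, ℓ(P)) = θ(P), f(ℓ(P), P) = ℓ(ε(P)), and g(f(ℓ(P), P), P) = ε(P). -/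
/-! Each of the four equations is a linear identity in `P` and `A`. Comparing coefficients, the
`P`-parts agree by ring arithmetic, and the `A`-parts reduce to `u * (3 - 2 * c) = 1` (for the
equations involving `θ`), together with `c⁻¹ * c = 1` for the first one. -/

section FullyLadder

variable {R M : Type*} [CommRing R] [AddCommGroup M] [Module R M] (A P : M)

theorem inv_mul_three_mul_sub_one_eq {c c' u : R} (hc : c' * c = 1) (hu : u * (3 - 2 * c) = 1) :
    c' * (3 * u - 1) = 2 * u := by
  linear_combination 2 * u * hc + c' * hu

theorem ladder_g_double_add_ell {c c' u : R} (hc : c' * c = 1) (hu : u * (3 - 2 * c) = 1) :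
    (P + P + A) + c' • (-(P + P + A) + ((P + u • A) + (P + u • A)) + u • A) - u • A
      = P + P + A + u • A := by
  have inner : -(P + P + A) + ((P + u • A) + (P + u • A)) + u • A = (3 * u - 1) • A := by
    module
  rw [inner, smul_smul, inv_mul_three_mul_sub_one_eq hc hu]
  module

theorem ladder_f_ell_right {c u : R} (hu : u * (3 - 2 * c) = 1) :
    c • (P - (P + u • A) - u • A) + ((P + u • A) + (P + u • A)) + u • A = P + P + A :=
  calc _ = P + P + (u * (3 - 2 * c)) • A := by module
    _ = P + P + A := by rw [hu, one_smul]

theorem ladder_f_ell_left (c u : R) :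
    c • ((P + u • A) - P - u • A) + (P + P) + u • A = P + P + u • A := by
  module

theorem ladder_g_f_ell_left (c' u : R) :
    (P + P + u • A) + c' • (-(P + P + u • A) + (P + P) + u • A) - u • A = P + P := by
  module

end FullyLadder

/-- the fully-interleaved ladder functions for the double-and-add
scalar multiplication (with fixed point `A` and coefficient `c` such that `c`
and `3 − 2c` are units, `u = (3 − 2c)⁻¹`) satisfy the fully-ladder equations,
over any module `M` over a commutative ring `R`. Here `2P` is written `P + P`. -/
theorem scalar_mult_fully_ladder_equations {R M : Type*} [CommRing R]
    [AddCommGroup M] [Module R M] (A : M) (c : R)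
    (hc : IsUnit c) (h3 : IsUnit (3 - 2 * c))
    (u : R) (hu : u = Ring.inverse (3 - 2 * c))
    (θ ε ℓ : M → M) (f g : M → M → M)
    (hθ : ∀ P, θ P = P + P + A)
    (hε : ∀ P, ε P = P + P)
    (hℓ : ∀ P, ℓ P = P + u • A)
    (hf : ∀ P Q, f P Q = c • (P - Q - u • A) + (Q + Q) + u • A)
    (hg : ∀ P Q, g P Q = P + Ring.inverse c • (-P + (Q + Q) + u • A) - u • A) :
    (∀ P, g (θ P) (ℓ P) = ℓ (θ P)) ∧
    (∀ P, f P (ℓ P) = θ P) ∧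
    (∀ P, f (ℓ P) P = ℓ (ε P)) ∧
    (∀ P, g (f (ℓ P) P) P = ε P) := by
  have hc' : Ring.inverse c * c = 1 := Ring.inverse_mul_cancel c hc
  have hu' : u * (3 - 2 * c) = 1 := hu ▸ Ring.inverse_mul_cancel _ h3
  have f_ell_left (P : M) : f (ℓ P) P = ℓ (ε P) := by
    rw [hf, hℓ, hℓ, hε]
    exact ladder_f_ell_left A P c u
  refine ⟨fun P => ?_, fun P => ?_, f_ell_left, fun P => ?_⟩
  · rw [hg, hθ, hℓ, hℓ]
    exact ladder_g_double_add_ell A P hc' hu'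
  · rw [hf, hℓ, hθ]
    exact ladder_f_ell_right A P hu'
  · rw [f_ell_left, hg, hℓ, hε]
    exact ladder_g_f_ell_left A P _ u
end
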